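/- Lemma 3.9 (an operator related to d). In the Clifford model, define 𝒯 := (iε′/2) Σ_{j=1}^{2k} 1⊗γ_j⊗(γ_jσ), a ℂ-linear endomorphism of A ⊗_ℂ ℂ^N ⊗_ℂ ℂ^N acting as the identity on the A factor. Then [𝒯, d] = d, i.e. 𝒯∘d − d∘𝒯 = d, where d := (1/2)(𝔇 − i𝔇̄). -/
import Mathlib

open scoped TensorProduct


/-- Shortcut instance to help instance search on the nested tensor product. -/
noncomputable instance tensorAddCommGroup {A : Type*} [Ring A] [Algebra ℂ A] {N : ℕ} :
    AddCommGroup (A ⊗[ℂ] ((Fin N → ℂ) ⊗[ℂ] (Fin N → ℂ))) :=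
  TensorProduct.addCommGroup

/-- The operator `∂ ⊗ M ⊗ M′` on `A ⊗ ℂ^N ⊗ ℂ^N` induced by a ℂ-linear map
`∂ : A → A` and `N × N` complex matrices `M`, `M′`. -/
noncomputable def cliffOp {A : Type*} [Ring A] [Algebra ℂ A] {N : ℕ}
    (p : A →ₗ[ℂ] A) (M M' : Matrix (Fin N) (Fin N) ℂ) :
    A ⊗[ℂ] ((Fin N → ℂ) ⊗[ℂ] (Fin N → ℂ)) →ₗ[ℂ]
      A ⊗[ℂ] ((Fin N → ℂ) ⊗[ℂ] (Fin N → ℂ)) :=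
  TensorProduct.map p (TensorProduct.map M.mulVecLin M'.mulVecLin)

section aux

variable {A : Type*} [Ring A] [Algebra ℂ A] {N : ℕ}

lemma mulVecLin_smul' (c : ℂ) (M : Matrix (Fin N) (Fin N) ℂ) :
    (c • M).mulVecLin = c • M.mulVecLin := by
  ext v i
  simp [Matrix.mulVecLin, Matrix.smul_mulVec]

lemma cliffOp_comp (p q : A →ₗ[ℂ] A) (M M' P P' : Matrix (Fin N) (Fin N) ℂ) :
    cliffOp p M M' ∘ₗ cliffOp q P P' = cliffOp (p ∘ₗ q) (M * P) (M' * P') := by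
  unfold cliffOp
  rw [Matrix.mulVecLin_mul, Matrix.mulVecLin_mul, ← TensorProduct.map_comp,
    ← TensorProduct.map_comp]

lemma cliffOp_right_add (p : A →ₗ[ℂ] A) (M M₁ M₂ : Matrix (Fin N) (Fin N) ℂ) :
    cliffOp p M (M₁ + M₂) = cliffOp p M M₁ + cliffOp p M M₂ := by
  unfold cliffOp
  rw [Matrix.mulVecLin_add, TensorProduct.map_add_right, TensorProduct.map_add_right]

lemma cliffOp_right_smul (p : A →ₗ[ℂ] A) (c : ℂ) (M M' : Matrix (Fin N) (Fin N) ℂ) :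
    cliffOp p M (c • M') = c • cliffOp p M M' := by
  unfold cliffOp
  rw [mulVecLin_smul', TensorProduct.map_smul_right, TensorProduct.map_smul_right]

lemma cliffOp_right_zero (p : A →ₗ[ℂ] A) (M : Matrix (Fin N) (Fin N) ℂ) :
    cliffOp p M (0 : Matrix (Fin N) (Fin N) ℂ) = 0 := by
  have : cliffOp p M ((0 : ℂ) • (0 : Matrix (Fin N) (Fin N) ℂ)) =
      (0 : ℂ) • cliffOp p M 0 := cliffOp_right_smul p 0 M 0
  simpa using this

lemma cliffOp_right_neg (p : A →ₗ[ℂ] A) (M M' : Matrix (Fin N) (Fin N) ℂ) :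
    cliffOp p M (-M') = -cliffOp p M M' := by
  rw [show -M' = (-1 : ℂ) • M' from (neg_one_smul ℂ M').symm, cliffOp_right_smul]
  exact neg_one_smul ℂ (cliffOp p M M')

lemma cliffOp_left_add (p : A →ₗ[ℂ] A) (M₁ M₂ M' : Matrix (Fin N) (Fin N) ℂ) :
    cliffOp p (M₁ + M₂) M' = cliffOp p M₁ M' + cliffOp p M₂ M' := by
  unfold cliffOp
  rw [Matrix.mulVecLin_add, TensorProduct.map_add_left, TensorProduct.map_add_right]

lemma cliffOp_left_smul (p : A →ₗ[ℂ] A) (c : ℂ) (M M' : Matrix (Fin N) (Fin N) ℂ) :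
    cliffOp p (c • M) M' = c • cliffOp p M M' := by
  unfold cliffOp
  rw [mulVecLin_smul', TensorProduct.map_smul_left, TensorProduct.map_smul_right]

lemma sum_comp' {ι : Type*} (s : Finset ι)
    (f : ι → (A ⊗[ℂ] ((Fin N → ℂ) ⊗[ℂ] (Fin N → ℂ)) →ₗ[ℂ] A ⊗[ℂ] ((Fin N → ℂ) ⊗[ℂ] (Fin N → ℂ))))
    (g : A ⊗[ℂ] ((Fin N → ℂ) ⊗[ℂ] (Fin N → ℂ)) →ₗ[ℂ] A ⊗[ℂ] ((Fin N → ℂ) ⊗[ℂ] (Fin N → ℂ))) :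
    (∑ i ∈ s, f i) ∘ₗ g = ∑ i ∈ s, f i ∘ₗ g := by
  ext x
  simp

lemma comp_sum' {ι : Type*} (s : Finset ι)
    (g : A ⊗[ℂ] ((Fin N → ℂ) ⊗[ℂ] (Fin N → ℂ)) →ₗ[ℂ] A ⊗[ℂ] ((Fin N → ℂ) ⊗[ℂ] (Fin N → ℂ)))
    (f : ι → (A ⊗[ℂ] ((Fin N → ℂ) ⊗[ℂ] (Fin N → ℂ)) →ₗ[ℂ] A ⊗[ℂ] ((Fin N → ℂ) ⊗[ℂ] (Fin N → ℂ)))) :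
    g ∘ₗ (∑ i ∈ s, f i) = ∑ i ∈ s, g ∘ₗ f i := by
  ext x
  simp

end aux

/-- Lemma 3.9: the bounded operator `𝒯 = (iε′/2) Σ_j 1 ⊗ γ_j ⊗ γ_jσ`
satisfies `[𝒯, d] = d` where `d = (1/2)(𝔇 − i𝔇̄)`. -/
theorem commutator_T_with_d
    {A : Type*} [Ring A] [Algebra ℂ A] {k N : ℕ}
    (par : Fin (2 * k) → (A →ₗ[ℂ] A))
    (hder : ∀ j (a b : A), par j (a * b) = par j a * b + a * par j b)
    (γ : Fin (2 * k) → Matrix (Fin N) (Fin N) ℂ)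
    (hcl : ∀ j r, γ j * γ r + γ r * γ j =
      if j = r then (-2 : ℂ) • (1 : Matrix (Fin N) (Fin N) ℂ) else 0)
    (σ : Matrix (Fin N) (Fin N) ℂ) (hσ : σ * σ = 1)
    (hσγ : ∀ j, σ * γ j + γ j * σ = 0)
    (ε' : ℂ) (hε : ε' = 1 ∨ ε' = -1)
    (D Dbar : A ⊗[ℂ] ((Fin N → ℂ) ⊗[ℂ] (Fin N → ℂ)) →ₗ[ℂ]
      A ⊗[ℂ] ((Fin N → ℂ) ⊗[ℂ] (Fin N → ℂ)))
    (hD : D = ∑ j, cliffOp (par j) 1 (γ j))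
    (hDbar : Dbar = (-ε') • ∑ j, cliffOp (par j) (γ j) σ)
    (d Tc : A ⊗[ℂ] ((Fin N → ℂ) ⊗[ℂ] (Fin N → ℂ)) →ₗ[ℂ]
      A ⊗[ℂ] ((Fin N → ℂ) ⊗[ℂ] (Fin N → ℂ)))
    (hd : d = (1 / 2 : ℂ) • (D - Complex.I • Dbar))
    (hT : Tc = (Complex.I * ε' / 2) •
      ∑ j, cliffOp (LinearMap.id : A →ₗ[ℂ] A) (γ j) (γ j * σ)) :
    Tc ∘ₗ d - d ∘ₗ Tc = d := by
  set E : Fin (2 * k) → _ := fun r => cliffOp (par r) 1 (γ r) with hE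
  set F : Fin (2 * k) → _ := fun r => cliffOp (par r) (γ r) σ with hF
  set G : Fin (2 * k) → _ := fun j => cliffOp (LinearMap.id : A →ₗ[ℂ] A) (γ j) (γ j * σ) with hG
  set c : ℂ := Complex.I * ε' / 2 with hc
  have hσγ' : ∀ j, σ * γ j = -(γ j * σ) := fun j => eq_neg_of_add_eq_zero_left (hσγ j)
  -- key commutation relations
  have key1 : ∀ j r, G j ∘ₗ E r - E r ∘ₗ G j = if j = r then (2 : ℂ) • F r else 0 := by
    intro j r
    rw [hE, hF, hG]
    rw [cliffOp_comp, cliffOp_comp]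
    simp only [LinearMap.id_comp, LinearMap.comp_id, Matrix.mul_one, Matrix.one_mul]
    have h1 : γ j * σ * γ r = -(γ j * γ r * σ) := by
      rw [Matrix.mul_assoc, hσγ' r, Matrix.mul_neg, Matrix.mul_assoc]
    rw [h1, cliffOp_right_neg, ← Matrix.mul_assoc]
    have : -cliffOp (par r) (γ j) (γ j * γ r * σ) - cliffOp (par r) (γ j) (γ r * γ j * σ) =
        -cliffOp (par r) (γ j) ((γ j * γ r + γ r * γ j) * σ) := by
      rw [Matrix.add_mul, cliffOp_right_add]
      abel
    rw [this, hcl j r]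
    by_cases hjr : j = r
    · subst hjr
      simp only [eq_self_iff_true, if_true]
      rw [smul_mul_assoc, Matrix.one_mul, cliffOp_right_smul]
      module
    · simp only [if_neg hjr]
      rw [Matrix.zero_mul, cliffOp_right_zero, neg_zero]
  have key2 : ∀ j r, G j ∘ₗ F r - F r ∘ₗ G j = if j = r then (-2 : ℂ) • E r else 0 := by
    intro j r
    rw [hE, hF, hG]
    rw [cliffOp_comp, cliffOp_comp]
    simp only [LinearMap.id_comp, LinearMap.comp_id]
    have h1 : γ j * σ * σ = γ j := by rw [Matrix.mul_assoc, hσ, Matrix.mul_one]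
    have h2 : σ * (γ j * σ) = -(γ j) := by
      rw [← Matrix.mul_assoc, hσγ' j, Matrix.neg_mul, Matrix.mul_assoc, hσ, Matrix.mul_one]
    rw [h1, h2, cliffOp_right_neg, sub_neg_eq_add, ← cliffOp_left_add, hcl j r]
    by_cases hjr : j = r
    · subst hjr
      simp only [eq_self_iff_true, if_true]
      rw [cliffOp_left_smul]
    · simp only [if_neg hjr]
      rw [show (0 : Matrix (Fin N) (Fin N) ℂ) = (0 : ℂ) • (1 : Matrix (Fin N) (Fin N) ℂ) by simp,
        cliffOp_left_smul, zero_smul]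
  -- sums
  have hsum1 : (∑ j, G j) ∘ₗ (∑ r, E r) - (∑ r, E r) ∘ₗ (∑ j, G j)
      = (2 : ℂ) • ∑ r, F r := by
    rw [sum_comp', sum_comp']
    simp only [comp_sum']
    rw [Finset.sum_comm (s := Finset.univ) (t := Finset.univ) (f := fun r j => E r ∘ₗ G j),
      ← Finset.sum_sub_distrib]
    simp only [← Finset.sum_sub_distrib]
    calc (∑ j, ∑ r, (G j ∘ₗ E r - E r ∘ₗ G j))
        = ∑ j, ∑ r, (if j = r then (2 : ℂ) • F r else 0) := by
          refine Finset.sum_congr rfl fun j _ => Finset.sum_congr rfl fun r _ => key1 j r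
      _ = ∑ j, (2 : ℂ) • F j := by
          refine Finset.sum_congr rfl fun j _ => ?_
          simp
      _ = (2 : ℂ) • ∑ r, F r := by rw [Finset.smul_sum]
  have hsum2 : (∑ j, G j) ∘ₗ (∑ r, F r) - (∑ r, F r) ∘ₗ (∑ j, G j)
      = (-2 : ℂ) • ∑ r, E r := by
    rw [sum_comp', sum_comp']
    simp only [comp_sum']
    rw [Finset.sum_comm (s := Finset.univ) (t := Finset.univ) (f := fun r j => F r ∘ₗ G j),
      ← Finset.sum_sub_distrib]
    simp only [← Finset.sum_sub_distrib]
    calc (∑ j, ∑ r, (G j ∘ₗ F r - F r ∘ₗ G j))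
        = ∑ j, ∑ r, (if j = r then (-2 : ℂ) • E r else 0) := by
          refine Finset.sum_congr rfl fun j _ => Finset.sum_congr rfl fun r _ => key2 j r
      _ = ∑ j, (-2 : ℂ) • E j := by
          refine Finset.sum_congr rfl fun j _ => ?_
          simp
      _ = (-2 : ℂ) • ∑ r, E r := by rw [Finset.smul_sum]
  -- rewrite d
  have hd' : d = (1 / 2 : ℂ) • (∑ r, E r) + c • (∑ r, F r) := by
    rw [hd, hD, hDbar, hc]
    module
  have hc2 : c * c = -(1 / 4) := by
    rcases hε with rfl | rfl <;> rw [hc] <;>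
      linear_combination (1 / 4 : ℂ) * Complex.I_mul_I
  rw [hT, hd']
  have hGE := eq_add_of_sub_eq hsum1
  have hGF := eq_add_of_sub_eq hsum2
  simp only [LinearMap.comp_add, LinearMap.add_comp, LinearMap.comp_smul, LinearMap.smul_comp]
  rw [hGE, hGF]
  have hI2 : Complex.I ^ 2 * ε' ^ 2 * (-1 / 2) = 1 / 2 := by
    rcases hε with rfl | rfl <;> linear_combination (-1 / 2 : ℂ) * Complex.I_mul_I
  match_scalars
  all_goals try ring
  all_goals linear_combination hI2
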